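/- Trapping under uniform non-degeneracy: let 1 ≤ W < d, Φ : ℝ^W → ℝ^d be C², and U ⊆ ℝ^d be open such that on Φ⁻¹(U) the first and second derivatives of Φ are uniformly bounded and the smallest eigenvalue of J(w)*J(w) is bounded below by some c² > 0, where J(w) = DΦ(w). Then F_Φ ∩ U ⊆ Φ(ℝ^W); i.e., every learnable target in U is exactly attained by Φ. -/

import Mathlib

/-!
Along the gradient flow the loss `‖f - Φ(w t)‖² / 2` is nonincreasing and tends to `0`.
Pick a time `T` at which it is already small. On a ball of radius `r ≍ c / C` around `w T`,
which the first-derivative bound keeps inside `Φ⁻¹(U)`, the second-derivative bound and the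
non-degeneracy of `DΦ(w T)` give `‖Φ w - Φ (w T)‖ ≥ (c/2) ‖w - w T‖`. So a point of the closed
ball whose loss does not exceed that of `w T` lies in the open ball, and by connectedness the
trajectory after `T` never leaves the ball. Then `Φ(w t) → f` with `w t` in a compact ball,
so `f` lies in its (closed) image.
-/

open MeasureTheory Filter Topology Set

/-- The square loss `L_f(w) = (1/2)‖f - Φ(w)‖²`. -/
noncomputable def loss {W d : ℕ} (Φ : EuclideanSpace ℝ (Fin W) → EuclideanSpace ℝ (Fin d))
    (f : EuclideanSpace ℝ (Fin d)) (w : EuclideanSpace ℝ (Fin W)) : ℝ :=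
  (1 / 2) * ‖f - Φ w‖ ^ 2

/-- The set of targets learnable by gradient flow started at `0`. -/
def learnableSet {W d : ℕ} (Φ : EuclideanSpace ℝ (Fin W) → EuclideanSpace ℝ (Fin d)) :
    Set (EuclideanSpace ℝ (Fin d)) :=
  {f | ∃ w : ℝ → EuclideanSpace ℝ (Fin W), w 0 = 0 ∧
    (∀ t ≥ (0 : ℝ), HasDerivAt w (-(gradient (loss Φ f) (w t))) t) ∧
    (⨅ t : Set.Ici (0 : ℝ), loss Φ f (w t)) = 0}

open Metric

section Geometry

variable {E F : Type*} [NormedAddCommGroup E] [NormedSpace ℝ E]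
  [NormedAddCommGroup F] [NormedSpace ℝ F]

/-- A fencing argument along the segment `[x, y]`: while `Φ` stays in the ball the derivative
bound applies, so `‖Φ - Φ x‖` grows at rate at most `C ‖y - x‖` and never reaches `ρ`. -/
theorem image_mem_ball_of_norm_fderiv_le {Φ : E → F} (hΦ : Differentiable ℝ Φ) {x y : E}
    {C ρ : ℝ} (hC₀ : 0 ≤ C) (hC : ∀ z, Φ z ∈ ball (Φ x) ρ → ‖fderiv ℝ Φ z‖ ≤ C)
    (hy : C * ‖y - x‖ < ρ) : Φ y ∈ ball (Φ x) ρ := by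
  set η := (ρ - C * ‖y - x‖) / 3 with hη
  have hη₀ : 0 < η := div_pos (sub_pos.2 hy) three_pos
  set K := C * ‖y - x‖ + η with hK
  set p : ℝ → E := fun s => x + s • (y - x)
  have hp : ∀ s, HasDerivAt p (y - x) s := fun s =>
    (((hasDerivAt_id' s).smul_const (y - x)).const_add x).congr_deriv (one_smul ℝ _)
  have hB : ∀ s, HasDerivAt (fun s => K * s + η) K s := fun s => by
    simpa using ((hasDerivAt_id s).const_mul K).add_const η
  have hfence := image_norm_le_of_norm_deriv_right_lt_deriv_boundary
    (f := fun s => Φ (p s) - Φ x) (a := 0) (b := 1)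
    (hΦ.continuous.comp (continuous_const.add (continuous_id.smul continuous_const))
      |>.sub continuous_const).continuousOn
    (fun s _ =>
      (((hΦ (p s)).hasFDerivAt.comp_hasDerivAt s (hp s)).sub_const (Φ x)).hasDerivWithinAt)
    (by simpa [p] using hη₀.le) hB
    (fun s hs hs_eq => by
      have hmem : Φ (p s) ∈ ball (Φ x) ρ := by
        rw [mem_ball, dist_eq_norm, hs_eq]
        have : K * s ≤ K := mul_le_of_le_one_right (by positivity) hs.2.le
        linarith
      calc ‖fderiv ℝ Φ (p s) (y - x)‖ ≤ ‖fderiv ℝ Φ (p s)‖ * ‖y - x‖ :=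
            ContinuousLinearMap.le_opNorm _ _
        _ ≤ C * ‖y - x‖ := by gcongr; exact hC _ hmem
        _ < K := by linarith)
    (right_mem_Icc.2 zero_le_one)
  rw [mem_ball, dist_eq_norm]
  simp only [p, one_smul, add_sub_cancel, mul_one] at hfence
  linarith

theorem sub_mul_norm_sub_le_norm_image_sub {Φ : E → F} (hΦ : ContDiff ℝ 2 Φ) {x y : E}
    {r C c : ℝ} (hC : ∀ z ∈ closedBall x r, ‖iteratedFDeriv ℝ 2 Φ z‖ ≤ C)
    (hc : ∀ v, c * ‖v‖ ≤ ‖fderiv ℝ Φ x v‖) (hy : y ∈ closedBall x r) :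
    (c - C * r) * ‖y - x‖ ≤ ‖Φ y - Φ x‖ := by
  have hx : x ∈ closedBall x r := mem_closedBall_self (nonempty_closedBall.1 ⟨y, hy⟩)
  have hC₀ : 0 ≤ C := (norm_nonneg _).trans (hC x hx)
  have hD2 : Differentiable ℝ (fderiv ℝ Φ) :=
    (hΦ.fderiv_right (m := 1) le_rfl).differentiable one_ne_zero
  have hDΦ : ∀ z ∈ closedBall x r, ‖fderiv ℝ Φ z - fderiv ℝ Φ x‖ ≤ C * r := fun z hz => by
    have := (convex_closedBall x r).norm_image_sub_le_of_norm_fderiv_le (fun z _ => hD2 z)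
      (fun z hz => by rw [← norm_iteratedFDeriv_one, norm_iteratedFDeriv_fderiv]; exact hC z hz)
      hx hz
    exact this.trans (by gcongr; exact mem_closedBall_iff_norm.1 hz)
  have htaylor := (convex_closedBall x r).norm_image_sub_le_of_norm_fderiv_le'
    (fun z _ => (hΦ.differentiable two_ne_zero) z) hDΦ hx hy
  calc (c - C * r) * ‖y - x‖ = c * ‖y - x‖ - C * r * ‖y - x‖ := by ring
    _ ≤ ‖fderiv ℝ Φ x (y - x)‖ - ‖Φ y - Φ x - fderiv ℝ Φ x (y - x)‖ := by
      gcongr; exact hc _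
    _ ≤ ‖Φ y - Φ x‖ := by
      have := norm_sub_norm_le (fderiv ℝ Φ x (y - x)) (fderiv ℝ Φ x (y - x) - (Φ y - Φ x))
      rw [sub_sub_cancel, norm_sub_rev] at this
      exact this

end Geometry

theorem ContinuousOn.mapsTo_ball_of_closedBall_imp_ball {X : Type*} [PseudoMetricSpace X]
    {γ : ℝ → X} {T r : ℝ} (hγ : ContinuousOn γ (Ici T)) (hr : 0 < r)
    (h : ∀ t ≥ T, γ t ∈ closedBall (γ T) r → γ t ∈ ball (γ T) r) :
    MapsTo γ (Ici T) (ball (γ T) r) := by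
  have := (isPreconnected_Ici.image γ hγ).subset_of_closure_inter_subset isOpen_ball
    ⟨γ T, mem_image_of_mem γ (mem_Ici.2 le_rfl), mem_ball_self hr⟩ (by
      rintro _ ⟨hcl, t, ht, rfl⟩
      exact h t ht (closure_ball_subset_closedBall hcl))
  exact fun t ht => this (mem_image_of_mem γ ht)

theorem AntitoneOn.tendsto_atTop_iInf_Ici {u : ℝ → ℝ} {a : ℝ} (hu : AntitoneOn u (Ici a))
    (hbdd : BddBelow (u '' Ici a)) : Tendsto u atTop (𝓝 (⨅ t : Ici a, u t)) := by
  rw [← tendsto_comp_val_Ici_atTop (a := a)]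
  exact tendsto_atTop_ciInf (fun s t hst => hu s.2 t.2 hst) (by rwa [← image_eq_range])

theorem antitoneOn_comp_of_hasDerivAt_neg_gradient {E : Type*} [NormedAddCommGroup E]
    [InnerProductSpace ℝ E] [CompleteSpace E] {g : E → ℝ} (hg : Differentiable ℝ g)
    {w : ℝ → E} {a : ℝ} (hw : ∀ t ≥ a, HasDerivAt w (-gradient g (w t)) t) :
    AntitoneOn (fun t => g (w t)) (Ici a) := by
  have hd : ∀ t ≥ a, HasDerivAt (fun t => g (w t)) (-‖gradient g (w t)‖ ^ 2) t := fun t ht => by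
    have hg' : HasFDerivAt g (InnerProductSpace.toDual ℝ E (gradient g (w t))) (w t) :=
      (hg (w t)).hasGradientAt.hasFDerivAt
    refine (hg'.comp_hasDerivAt t (hw t ht)).congr_deriv ?_
    rw [InnerProductSpace.toDual_apply_apply, inner_neg_right, real_inner_self_eq_norm_sq]
  refine antitoneOn_of_hasDerivWithinAt_nonpos (convex_Ici a)
    (fun t ht => (hd t ht).continuousAt.continuousWithinAt)
    (fun t ht => (hd t (interior_subset ht)).hasDerivWithinAt) fun t _ => ?_
  exact neg_nonpos.2 (sq_nonneg _)

section Loss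

variable {W d : ℕ} {Φ : EuclideanSpace ℝ (Fin W) → EuclideanSpace ℝ (Fin d)}
  {f : EuclideanSpace ℝ (Fin d)}

theorem loss_nonneg (w : EuclideanSpace ℝ (Fin W)) : 0 ≤ loss Φ f w := by
  unfold loss; positivity

theorem loss_le_loss_iff {v w : EuclideanSpace ℝ (Fin W)} :
    loss Φ f v ≤ loss Φ f w ↔ ‖f - Φ v‖ ≤ ‖f - Φ w‖ := by
  unfold loss
  rw [mul_le_mul_iff_right₀ (by norm_num), pow_le_pow_iff_left₀ (norm_nonneg _) (norm_nonneg _)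
    two_ne_zero]

theorem differentiable_loss (hΦ : Differentiable ℝ Φ) : Differentiable ℝ (loss Φ f) :=
  ((differentiable_const f).sub hΦ).norm_sq ℝ |>.const_mul _

theorem tendsto_nhds_of_tendsto_loss_zero {ι : Type*} {l : Filter ι}
    {x : ι → EuclideanSpace ℝ (Fin W)} (h : Tendsto (fun i => loss Φ f (x i)) l (𝓝 0)) :
    Tendsto (fun i => Φ (x i)) l (𝓝 f) := by
  rw [tendsto_iff_norm_sub_tendsto_zero]
  have h2 : Tendsto (fun i => 2 * loss Φ f (x i)) l (𝓝 0) := by simpa using h.const_mul 2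
  have := (Real.continuous_sqrt.tendsto 0).comp h2
  simp only [loss, Real.sqrt_zero] at this
  refine this.congr fun i => ?_
  simp [norm_sub_rev f, Real.sqrt_sq (norm_nonneg _)]

end Loss

/-- Take `r ≍ min(c, δ) / C` with `ball f δ ⊆ U`, and `ε ≍ c r`: the Taylor bound gives
`(c/2)‖w - w₀‖ ≤ ‖Φ w - Φ w₀‖ ≤ 2 ‖f - Φ w₀‖ < c r / 2`. -/
theorem exists_trapping_radius {E F : Type*} [NormedAddCommGroup E] [NormedSpace ℝ E]
    [NormedAddCommGroup F] [NormedSpace ℝ F] {Φ : E → F} (hΦ : ContDiff ℝ 2 Φ) {U : Set F}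
    (hU : IsOpen U) {C c : ℝ} (hd1 : ∀ w ∈ Φ ⁻¹' U, ‖fderiv ℝ Φ w‖ ≤ C)
    (hd2 : ∀ w ∈ Φ ⁻¹' U, ‖iteratedFDeriv ℝ 2 Φ w‖ ≤ C) (hc : 0 < c)
    (hnondeg : ∀ w ∈ Φ ⁻¹' U, ∀ v, c * ‖v‖ ≤ ‖fderiv ℝ Φ w v‖) {f : F} (hf : f ∈ U) :
    ∃ r > 0, ∃ ε > 0, ∀ w₀, ‖f - Φ w₀‖ < ε →
      ∀ w ∈ closedBall w₀ r, ‖f - Φ w‖ ≤ ‖f - Φ w₀‖ → w ∈ ball w₀ r := by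
  obtain ⟨δ, hδ, hδU⟩ := Metric.isOpen_iff.1 hU f hf
  set K := max C 1
  have hK : 0 < K := zero_lt_one.trans_le (le_max_right _ _)
  set r := min (c / (2 * K)) (δ / (4 * K))
  have hr : 0 < r := lt_min (by positivity) (by positivity)
  have hKr_c : K * r ≤ c / 2 :=
    calc K * r ≤ K * (c / (2 * K)) := by gcongr; exact min_le_left _ _
      _ = c / 2 := by field_simp
  have hKr_δ : K * r < δ / 2 :=
    calc K * r ≤ K * (δ / (4 * K)) := by gcongr; exact min_le_right _ _
      _ < δ / 2 := by field_simp; linarith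
  refine ⟨r, hr, min (c * r / 4) (δ / 2), by positivity, fun w₀ hw₀ w hw hle => ?_⟩
  have hw₀c : ‖f - Φ w₀‖ < c * r / 4 := hw₀.trans_le (min_le_left _ _)
  have hw₀δ : ‖f - Φ w₀‖ < δ / 2 := hw₀.trans_le (min_le_right _ _)
  have hsub : ball (Φ w₀) (δ / 2) ⊆ U := fun y hy => hδU <| by
    rw [mem_ball] at hy ⊢
    linarith [dist_triangle y (Φ w₀) f, dist_eq_norm' (Φ w₀) f]
  have hball : closedBall w₀ r ⊆ Φ ⁻¹' U := fun y hy => hsub <|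
    image_mem_ball_of_norm_fderiv_le (hΦ.differentiable two_ne_zero) hK.le
      (fun z hz => (hd1 z (hsub hz)).trans (le_max_left _ _))
      ((mul_le_mul_of_nonneg_left (mem_closedBall_iff_norm.1 hy) hK.le).trans_lt hKr_δ)
  have hlower : (c - K * r) * ‖w - w₀‖ ≤ ‖Φ w - Φ w₀‖ := sub_mul_norm_sub_le_norm_image_sub hΦ
    (fun z hz => (hd2 z (hball hz)).trans (le_max_left _ _))
    (hnondeg w₀ (hball (mem_closedBall_self hr.le))) hw
  have hupper : ‖Φ w - Φ w₀‖ ≤ 2 * ‖f - Φ w₀‖ := by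
    rw [← sub_sub_sub_cancel_left (Φ w₀) (Φ w) f]
    linarith [norm_sub_le (f - Φ w₀) (f - Φ w)]
  rw [mem_ball, dist_eq_norm]
  have : c / 2 * ‖w - w₀‖ < c / 2 * r := by nlinarith [norm_nonneg (w - w₀)]
  exact lt_of_mul_lt_mul_left this (by positivity)

theorem trapping_uniform_nondegenerate_general (W d : ℕ)
    (Φ : EuclideanSpace ℝ (Fin W) → EuclideanSpace ℝ (Fin d))
    (hΦ : ContDiff ℝ 2 Φ)
    (U : Set (EuclideanSpace ℝ (Fin d))) (hU : IsOpen U)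
    (C : ℝ)
    (hd1 : ∀ w ∈ Φ ⁻¹' U, ‖fderiv ℝ Φ w‖ ≤ C)
    (hd2 : ∀ w ∈ Φ ⁻¹' U, ‖iteratedFDeriv ℝ 2 Φ w‖ ≤ C)
    (c : ℝ) (hc : 0 < c)
    (hnondeg : ∀ w ∈ Φ ⁻¹' U, ∀ v : EuclideanSpace ℝ (Fin W),
      c * ‖v‖ ≤ ‖fderiv ℝ Φ w v‖) :
    learnableSet Φ ∩ U ⊆ Set.range Φ := by
  rintro f ⟨⟨w, -, hw, hinf⟩, hfU⟩
  obtain ⟨r, hr, ε, hε, htrap⟩ := exists_trapping_radius hΦ hU hd1 hd2 hc hnondeg hfU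
  have hanti : AntitoneOn (fun t => loss Φ f (w t)) (Ici 0) :=
    antitoneOn_comp_of_hasDerivAt_neg_gradient
      (differentiable_loss (hΦ.differentiable two_ne_zero)) hw
  have hlim : Tendsto (fun t => Φ (w t)) atTop (𝓝 f) := by
    refine tendsto_nhds_of_tendsto_loss_zero ?_
    rw [← hinf]
    exact hanti.tendsto_atTop_iInf_Ici ⟨0, by rintro _ ⟨t, -, rfl⟩; exact loss_nonneg _⟩
  obtain ⟨T, hT₀, hTε⟩ :=
    ((eventually_ge_atTop 0).and (hlim.eventually (ball_mem_nhds f hε))).exists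
  rw [dist_eq_norm'] at hTε
  have hstay : MapsTo w (Ici T) (ball (w T) r) :=
    ContinuousOn.mapsTo_ball_of_closedBall_imp_ball
      (fun t ht => (hw t (hT₀.trans ht)).continuousAt.continuousWithinAt) hr
      fun t ht hmem => htrap (w T) hTε (w t) hmem <|
        loss_le_loss_iff.1 (hanti hT₀ (hT₀.trans ht) ht)
  have hclosed : IsClosed (Φ '' closedBall (w T) r) :=
    ((isCompact_closedBall _ _).image hΦ.continuous).isClosed
  obtain ⟨x, -, hx⟩ := hclosed.mem_of_tendsto hlim <| (eventually_ge_atTop T).mono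
    fun t ht => mem_image_of_mem Φ (ball_subset_closedBall (hstay ht))
  exact ⟨x, hx⟩

/-- Trapping under uniform non-degeneracy: if on `Φ⁻¹(U)` the first and second derivatives
of `Φ` are uniformly bounded and the Jacobian is uniformly non-degenerate, then every
learnable target in `U` is exactly attained by `Φ`. -/
theorem trapping_uniform_nondegenerate (W d : ℕ) (hW : 1 ≤ W) (hWd : W < d)
    (Φ : EuclideanSpace ℝ (Fin W) → EuclideanSpace ℝ (Fin d))
    (hΦ : ContDiff ℝ 2 Φ)
    (U : Set (EuclideanSpace ℝ (Fin d))) (hU : IsOpen U)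
    (C : ℝ)
    (hd1 : ∀ w ∈ Φ ⁻¹' U, ‖fderiv ℝ Φ w‖ ≤ C)
    (hd2 : ∀ w ∈ Φ ⁻¹' U, ‖iteratedFDeriv ℝ 2 Φ w‖ ≤ C)
    (c : ℝ) (hc : 0 < c)
    (hnondeg : ∀ w ∈ Φ ⁻¹' U, ∀ v : EuclideanSpace ℝ (Fin W),
      c * ‖v‖ ≤ ‖fderiv ℝ Φ w v‖) :
    learnableSet Φ ∩ U ⊆ Set.range Φ :=
  trapping_uniform_nondegenerate_general W d Φ hΦ U hU C hd1 hd2 c hc hnondeg
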